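/- Let A = A₀ ⊕ A₁ be a ℤ/2-graded commutative ring (even elements central, odd elements anticommute among themselves), X a set, and P : X² → A₀ symmetric (P(x,y) = P(y,x)), G : X² → A₀ arbitrary, S : X² → A₀ antisymmetric (S(x,y) = −S(y,x)), F : X² → A₁. For points r, t_1, …, t_n, s ∈ X set t_0 := r, t_{n+1} := s, write G^k(x_0,…,x_k) := ∏_{i=0}^{k−1} G(x_i,x_{i+1}) and S^k(x_0,…,x_k) := ∏_{i=0}^{k−1} S(x_i,x_{i+1}) (empty products equal 1), and define Π^{(n+2)}(r;t_1,…,t_n;s) := ∑_{α=0}^{n} (−1)^α G^α(t_α,…,t_1,r) P(t_α,t_{α+1}) G^{n−α}(t_{α+1},…,t_n,s) − ∑_{α=0}^{n−1} ∑_{β=0}^{n−1−α} (−1)^α G^α(t_α,…,t_1,r) F(t_{α+1},t_α) S^β(t_{α+1},…,t_{α+β+1}) F(t_{α+β+1},t_{α+β+2}) G^{n−1−α−β}(t_{α+β+2},…,t_n,s). Then the reflection symmetry holds: Π^{(n+2)}(r;t_1,…,t_n;s) = (−1)^n Π^{(n+2)}(s;t_n,…,t_1;r). -/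

import Mathlib

/-!
Reversing the chain sends the bosonic term with the `P`-edge at position `α` to the one at
position `n - α`, and the fermionic term `(α, β)` to `(n - 1 - α - β, β)`: the two `G`-chains on
either side of the distinguished edges trade places, `P` is symmetric, the `S`-chain of length `β`
picks up `(-1)^β` from antisymmetry, and the two odd factors `F` are exchanged at the cost of one
sign. In every term the signs combine to `(-1)^n`. To reorder the even factors freely they are
regarded as values in the centre of `A`, a commutative ring.
-/

/-- Ordered path product `f(x₀,x₁) f(x₁,x₂) ⋯ f(x_{k−1},x_k)` starting at `x`
through the list of subsequent points; the empty product is `1`. -/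
def pathProd {A X : Type*} [Monoid A] (f : X → X → A) : X → List X → A
  | _, [] => 1
  | x, y :: l => f x y * pathProd f y l

/-- The fundamental linear chain block
`Π^{(n+2)}(r;t₁,…,tₙ;s) = ∑_{α=0}^{n} (−1)^α G^α(t_α,…,t₁,r) P(t_α,t_{α+1}) G^{n−α}(t_{α+1},…,tₙ,s)
 − ∑_{α=0}^{n−1} ∑_{β=0}^{n−1−α} (−1)^α G^α(t_α,…,t₁,r) F(t_{α+1},t_α)
   S^β(t_{α+1},…,t_{α+β+1}) F(t_{α+β+1},t_{α+β+2}) G^{n−1−α−β}(t_{α+β+2},…,tₙ,s)`,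
with `t₀ := r`, `t_{n+1} := s`. -/
def PiBlock {A X : Type*} [Ring A] (P G S F : X → X → A)
    (r : X) (ts : List X) (s : X) : A :=
  let n := ts.length
  let pt : ℕ → X := fun i => (r :: (ts ++ [s])).getD i s
  (∑ α ∈ Finset.range (n + 1),
      (-1 : A) ^ α * pathProd G (pt α) ((List.range α).reverse.map pt)
        * P (pt α) (pt (α + 1))
        * pathProd G (pt (α + 1)) ((List.range' (α + 2) (n - α)).map pt))
  - (∑ α ∈ Finset.range n, ∑ β ∈ Finset.range (n - α),
      (-1 : A) ^ α * pathProd G (pt α) ((List.range α).reverse.map pt)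
        * F (pt (α + 1)) (pt α)
        * pathProd S (pt (α + 1)) ((List.range' (α + 2) β).map pt)
        * F (pt (α + β + 1)) (pt (α + β + 2))
        * pathProd G (pt (α + β + 2)) ((List.range' (α + β + 3) (n - 1 - α - β)).map pt))

/-- The fermionic linear chain block
`Π_F^{(n+2)}(r;t₁,…,tₙ;s) = ∑_{α=0}^{n} S^α(r,t₁,…,t_α) F(t_α,t_{α+1}) G^{n−α}(t_{α+1},…,tₙ,s)`,
with `t₀ := r`, `t_{n+1} := s`. -/
def PiFBlock {A X : Type*} [Ring A] (S F G : X → X → A)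
    (r : X) (ts : List X) (s : X) : A :=
  let n := ts.length
  let pt : ℕ → X := fun i => (r :: (ts ++ [s])).getD i s
  ∑ α ∈ Finset.range (n + 1),
    pathProd S (pt 0) ((List.range' 1 α).map pt)
      * F (pt α) (pt (α + 1))
      * pathProd G (pt (α + 1)) ((List.range' (α + 2) (n - α)).map pt)

open Finset

section PathProd

variable {M X : Type*}

theorem map_pathProd [Monoid M] {N F : Type*} [Monoid N] [FunLike F M N] [MonoidHomClass F M N]
    (φ : F) (f : X → X → M) (x : X) (l : List X) :
    φ (pathProd f x l) = pathProd (fun x y => φ (f x y)) x l := by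
  induction l generalizing x with
  | nil => simp [pathProd]
  | cons y l ih => simp [pathProd, ih]

variable [CommMonoid M] (f : X → X → M) (pt : ℕ → X)

theorem pathProd_map_range' (a k : ℕ) :
    pathProd f (pt a) ((List.range' (a + 1) k).map pt) =
      ∏ i ∈ Ico a (a + k), f (pt i) (pt (i + 1)) := by
  induction k generalizing a with
  | zero => simp [pathProd]
  | succ k ih =>
    rw [List.range'_succ, List.map_cons, pathProd, ih, show a + (k + 1) = a + 1 + k by omega,
      prod_eq_prod_Ico_succ_bot (show a < a + 1 + k by omega)]

theorem pathProd_map_range_reverse (m : ℕ) :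
    pathProd f (pt m) ((List.range m).reverse.map pt) = ∏ i ∈ range m, f (pt (i + 1)) (pt i) := by
  induction m with
  | zero => simp [pathProd]
  | succ m ih =>
    rw [List.range_succ, List.reverse_append, List.reverse_singleton, List.singleton_append,
      List.map_cons, pathProd, ih, prod_range_succ, mul_comm]

theorem prod_Ico_edge_reflect {q : ℕ → X} {n : ℕ} (hq : ∀ i ≤ n + 1, q i = pt (n + 1 - i))
    {a b : ℕ} (hb : b ≤ n + 1) :
    ∏ i ∈ Ico a b, f (q i) (q (i + 1)) = ∏ i ∈ Ico (n + 1 - b) (n + 1 - a), f (pt (i + 1)) (pt i) := by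
  rw [← prod_Ico_reflect (fun j => f (pt (j + 1)) (pt j)) a hb]
  refine prod_congr rfl fun i hi => ?_
  have hi : i < b := (mem_Ico.1 hi).2
  rw [hq i (by omega), hq (i + 1) (by omega)]
  congr 2 <;> omega

end PathProd

theorem sum_range_sum_range_sub_reflect {M : Type*} [AddCommMonoid M] (g : ℕ → ℕ → M) (n : ℕ) :
    ∑ α ∈ range n, ∑ β ∈ range (n - α), g (n - 1 - α - β) β =
      ∑ α ∈ range n, ∑ β ∈ range (n - α), g α β := by
  have swap (h : ℕ → ℕ → M) : ∑ α ∈ range n, ∑ β ∈ range (n - α), h α β =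
      ∑ β ∈ range n, ∑ α ∈ range (n - β), h α β :=
    sum_comm' fun α β => by simp only [mem_range]; omega
  rw [swap (fun α β => g (n - 1 - α - β) β), swap g]
  refine sum_congr rfl fun β _ => ?_
  refine (sum_congr rfl fun α _ => ?_).trans (sum_range_reflect (fun α => g α β) (n - β))
  rw [show n - 1 - α - β = n - β - 1 - α by omega]

def chainPoint {X : Type*} (r : X) (ts : List X) (s : X) (i : ℕ) : X :=
  (r :: (ts ++ [s])).getD i s

theorem chainPoint_reverse {X : Type*} (r s : X) (ts : List X) {i : ℕ} (hi : i ≤ ts.length + 1) :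
    chainPoint s ts.reverse r i = chainPoint r ts s (ts.length + 1 - i) := by
  have hrev : s :: (ts.reverse ++ [r]) = (r :: (ts ++ [s])).reverse := by simp
  rw [chainPoint, chainPoint, hrev, List.getD_eq_getElem _ _ (by simp; omega),
    List.getD_eq_getElem _ _ (by simp), List.getElem_reverse]
  congr 1
  simp

section ChainBlock

variable {R A X : Type*} [CommRing R] [Ring A] [Algebra R A]

def bosonicTerm (P G : X → X → R) (pt : ℕ → X) (n α : ℕ) : R :=
  (-1) ^ α * (∏ i ∈ range α, G (pt (i + 1)) (pt i)) * P (pt α) (pt (α + 1))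
    * ∏ i ∈ Ico (α + 1) (n + 1), G (pt i) (pt (i + 1))

def fermionicCoeff (G S : X → X → R) (pt : ℕ → X) (n α β : ℕ) : R :=
  (-1) ^ α * (∏ i ∈ range α, G (pt (i + 1)) (pt i))
    * (∏ i ∈ Ico (α + 1) (α + β + 1), S (pt i) (pt (i + 1)))
    * ∏ i ∈ Ico (α + β + 2) (n + 1), G (pt i) (pt (i + 1))

/-- `Π^{(n+2)}` along the points `pt 0, …, pt (n + 1)`, with the even functions valued in a
commutative ring acting centrally on `A` and the even factors of each fermionic term collected in
front of its two `F`s. -/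
def chainBlock (P G S : X → X → R) (F : X → X → A) (pt : ℕ → X) (n : ℕ) : A :=
  algebraMap R A (∑ α ∈ range (n + 1), bosonicTerm P G pt n α)
    - ∑ α ∈ range n, ∑ β ∈ range (n - α), algebraMap R A (fermionicCoeff G S pt n α β)
        * (F (pt (α + 1)) (pt α) * F (pt (α + β + 1)) (pt (α + β + 2)))

theorem PiBlock_algebraMap (P G S : X → X → R) (F : X → X → A) (r : X) (ts : List X) (s : X) :
    PiBlock (fun x y => algebraMap R A (P x y)) (fun x y => algebraMap R A (G x y))
        (fun x y => algebraMap R A (S x y)) F r ts s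
      = chainBlock P G S F (chainPoint r ts s) ts.length := by
  have collect (a b c : R) (x y : A) : algebraMap R A a * x * algebraMap R A b * y * algebraMap R A c
      = algebraMap R A (a * b * c) * (x * y) := by
    simp only [map_mul, mul_assoc, Algebra.left_comm x]
    rw [← Algebra.commutes c y, Algebra.left_comm x]
  unfold PiBlock
  extract_lets n pt
  rw [show chainPoint r ts s = pt from rfl, chainBlock, map_sum]
  have sign (k : ℕ) : (-1 : A) ^ k = algebraMap R A ((-1) ^ k) := by simp
  simp only [← map_pathProd (algebraMap R A), pathProd_map_range', pathProd_map_range_reverse, sign]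
  congr 1
  · refine sum_congr rfl fun α hα => ?_
    rw [show α + 1 + (n - α) = ts.length + 1 by grind, bosonicTerm]
    simp only [map_mul]
  · refine sum_congr rfl fun α hα => sum_congr rfl fun β hβ => ?_
    rw [show α + β + 2 + (n - 1 - α - β) = ts.length + 1 by grind, Nat.add_right_comm α 1 β,
      ← map_mul, collect, fermionicCoeff]

variable {pt q : ℕ → X} {n : ℕ}

theorem bosonicTerm_reflect (P G : X → X → R) (hP : ∀ x y, P x y = P y x)
    (hq : ∀ i ≤ n + 1, q i = pt (n + 1 - i)) {α : ℕ} (hα : α ≤ n) :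
    bosonicTerm P G q n (n - α) = (-1) ^ n * bosonicTerm P G pt n α := by
  rw [bosonicTerm, bosonicTerm, range_eq_Ico,
    prod_Ico_edge_reflect (fun x y => G y x) pt hq (by omega),
    prod_Ico_edge_reflect G pt hq le_rfl, hq (n - α) (by omega), hq (n - α + 1) (by omega), hP,
    show n + 1 - (n - α) = α + 1 by omega, show n + 1 - (n - α + 1) = α by omega,
    Nat.sub_zero, Nat.sub_self, ← range_eq_Ico]
  have sign : (-1 : R) ^ (n - α) = (-1) ^ n * (-1) ^ α := by
    rw [← pow_add]
    exact neg_one_pow_congr (by simp only [Nat.even_iff]; omega)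
  linear_combination (∏ i ∈ Ico (α + 1) (n + 1), G (pt i) (pt (i + 1))) * P (pt α) (pt (α + 1))
    * (∏ i ∈ range α, G (pt (i + 1)) (pt i)) * sign

theorem fermionicCoeff_reflect (G S : X → X → R) (hS : ∀ x y, S x y = -S y x)
    (hq : ∀ i ≤ n + 1, q i = pt (n + 1 - i)) {α β : ℕ} (hαβ : α + β < n) :
    fermionicCoeff G S q n (n - 1 - α - β) β = (-1) ^ (n + 1) * fermionicCoeff G S pt n α β := by
  rw [fermionicCoeff, fermionicCoeff, range_eq_Ico,
    prod_Ico_edge_reflect (fun x y => G y x) pt hq (by omega),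
    prod_Ico_edge_reflect S pt hq (by omega), prod_Ico_edge_reflect G pt hq le_rfl,
    show n + 1 - (n - 1 - α - β) = α + β + 2 by omega,
    show n + 1 - (n - 1 - α - β + β + 1) = α + 1 by omega,
    show n + 1 - (n - 1 - α - β + 1) = α + β + 1 by omega,
    show n + 1 - (n - 1 - α - β + β + 2) = α by omega, Nat.sub_zero, Nat.sub_self, ← range_eq_Ico]
  simp only [hS (pt (_ + 1)), prod_neg, Nat.card_Ico, show α + β + 1 - (α + 1) = β by omega]
  have sign : (-1 : R) ^ (n - 1 - α - β) * (-1) ^ β = (-1) ^ (n + 1) * (-1) ^ α := by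
    rw [← pow_add, ← pow_add]
    exact neg_one_pow_congr (by simp only [Nat.even_iff]; omega)
  linear_combination (∏ i ∈ Ico (α + β + 2) (n + 1), G (pt i) (pt (i + 1)))
    * (∏ i ∈ Ico (α + 1) (α + β + 1), S (pt i) (pt (i + 1)))
    * (∏ i ∈ range α, G (pt (i + 1)) (pt i)) * sign

theorem chainBlock_reflect (P G S : X → X → R) (F : X → X → A) (hP : ∀ x y, P x y = P y x)
    (hS : ∀ x y, S x y = -S y x) (hF : ∀ x y z w, F x y * F z w = -(F z w * F x y))
    (hq : ∀ i ≤ n + 1, q i = pt (n + 1 - i)) :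
    chainBlock P G S F q n = (-1) ^ n * chainBlock P G S F pt n := by
  have bosonic : ∑ α ∈ range (n + 1), bosonicTerm P G q n α
      = (-1) ^ n * ∑ α ∈ range (n + 1), bosonicTerm P G pt n α := by
    rw [← sum_range_reflect, mul_sum]
    refine sum_congr rfl fun α hα => ?_
    rw [Nat.add_sub_cancel, bosonicTerm_reflect P G hP hq (by grind)]
  have fermionic : ∑ α ∈ range n, ∑ β ∈ range (n - α), algebraMap R A (fermionicCoeff G S q n α β)
        * (F (q (α + 1)) (q α) * F (q (α + β + 1)) (q (α + β + 2)))
      = (-1) ^ n * ∑ α ∈ range n, ∑ β ∈ range (n - α),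
        algebraMap R A (fermionicCoeff G S pt n α β)
          * (F (pt (α + 1)) (pt α) * F (pt (α + β + 1)) (pt (α + β + 2))) := by
    have hq' (i j : ℕ) (h : i + j = n + 1) : q i = pt j := by rw [hq i (by omega)]; congr 1; omega
    rw [← sum_range_sum_range_sub_reflect, mul_sum]
    refine sum_congr rfl fun α hα => ?_
    rw [mul_sum]
    refine sum_congr rfl fun β hβ => ?_
    have hαβ : α + β < n := by grind
    rw [fermionicCoeff_reflect G S hS hq hαβ, hq' _ (α + β + 1) (by omega),
      hq' _ (α + β + 2) (by omega), hq' _ (α + 1) (by omega), hq' _ α (by omega), hF]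
    simp only [map_mul, map_pow, map_neg, map_one]
    noncomm_ring
  rw [chainBlock, chainBlock, bosonic, fermionic, map_mul, map_pow, map_neg, map_one, mul_sub]

end ChainBlock

theorem exists_algebraMap_center_eq {A X : Type*} [Ring A] (f : X → X → A)
    (hf : ∀ x y a, f x y * a = a * f x y) :
    ∃ f' : X → X → Subring.center A, f = fun x y => algebraMap (Subring.center A) A (f' x y) :=
  ⟨fun x y => ⟨f x y, Subring.mem_center_iff.2 fun a => (hf x y a).symm⟩, rfl⟩

/-- reflection symmetry of the fundamental linear chain block:
`Π^{(n+2)}(r;t₁,…,tₙ;s) = (−1)ⁿ Π^{(n+2)}(s;tₙ,…,t₁;r)`, in a ℤ/2-graded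
commutative ring with `P, G, S` even (central), `P` symmetric, `S` antisymmetric,
and `F` odd (values pairwise anticommute). -/
theorem PiBlock_reflection {A X : Type*} [Ring A] (P G S F : X → X → A)
    (hPsymm : ∀ x y, P x y = P y x)
    (hSanti : ∀ x y, S x y = -S y x)
    (hPcentral : ∀ x y a, P x y * a = a * P x y)
    (hGcentral : ∀ x y a, G x y * a = a * G x y)
    (hScentral : ∀ x y a, S x y * a = a * S x y)
    (hFodd : ∀ x y z w, F x y * F z w = -(F z w * F x y))
    (r s : X) (ts : List X) :
    PiBlock P G S F r ts s = (-1 : A) ^ ts.length * PiBlock P G S F s ts.reverse r := by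
  obtain ⟨P, rfl⟩ := exists_algebraMap_center_eq P hPcentral
  obtain ⟨G, rfl⟩ := exists_algebraMap_center_eq G hGcentral
  obtain ⟨S, rfl⟩ := exists_algebraMap_center_eq S hScentral
  rw [PiBlock_algebraMap, PiBlock_algebraMap, List.length_reverse,
    chainBlock_reflect P G S F (fun x y => Subtype.ext (hPsymm x y))
      (fun x y => Subtype.ext (hSanti x y)) hFodd fun i hi => chainPoint_reverse r s ts hi,
    ← mul_assoc, ← pow_add, Even.neg_one_pow ⟨_, rfl⟩, one_mul]
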